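/- arXiv:2603.29945 — 9 statements merged into one kernel-verified Lean document; each statement's English description precedes it below -/
import Mathlib

section
/- Let q and t = 2r be integers with q ≥ t+1 and r ≥ 1. Define Δ(k) = C(q+1, k-1)*C(q-1, t-k) - C(q, k-2)*C(q, t-k+1) for k in [1, t+1] (with out-of-range binomial coefficients equal to zero). Then Δ(k) > 0 for all k in [1, r+1] and Δ(k) < 0 for all k in [r+2, t+1]. -/
private lemma key_id (q r k : ℕ) (hr : 1 ≤ r) (hq : 2 * r + 1 ≤ q)
    (hk2 : 2 ≤ k) (hkt : k ≤ 2 * r) :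
    (q : ℤ) * ((k - 1 : ℕ) : ℤ) *
      ((Nat.choose (q + 1) (k - 1) * Nat.choose (q - 1) (2 * r - k) : ℤ)
        - (Nat.choose q (k - 2) * Nat.choose q (2 * r + 1 - k) : ℤ))
    = (Nat.choose q (k - 2) : ℤ) * (Nat.choose q (2 * r + 1 - k) : ℤ)
        * ((q + 1) * ((2 * r + 1 - k : ℕ) : ℤ) - (q : ℤ) * ((k - 1 : ℕ) : ℤ)) := by
  have n1 : (k - 1) * Nat.choose (q + 1) (k - 1) = (q + 1) * Nat.choose q (k - 2) := by
    have h := Nat.add_one_mul_choose_eq q (k - 2)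
    have hk : k - 2 + 1 = k - 1 := by omega
    rw [hk] at h
    rw [mul_comm]
    exact h.symm
  have n2 : q * Nat.choose (q - 1) (2 * r - k)
      = (2 * r + 1 - k) * Nat.choose q (2 * r + 1 - k) := by
    have h := Nat.add_one_mul_choose_eq (q - 1) (2 * r - k)
    have h1 : q - 1 + 1 = q := by omega
    have h2 : 2 * r - k + 1 = 2 * r + 1 - k := by omega
    rw [h1, h2] at h
    rw [h, mul_comm]
  have e1 : ((k - 1 : ℕ) : ℤ) * (Nat.choose (q + 1) (k - 1) : ℤ)
      = ((q : ℤ) + 1) * (Nat.choose q (k - 2) : ℤ) := by exact_mod_cast n1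
  have e2 : (q : ℤ) * (Nat.choose (q - 1) (2 * r - k) : ℤ)
      = ((2 * r + 1 - k : ℕ) : ℤ) * (Nat.choose q (2 * r + 1 - k) : ℤ) := by exact_mod_cast n2
  linear_combination ((q : ℤ) * (Nat.choose (q - 1) (2 * r - k) : ℤ)) * e1
    + (((q : ℤ) + 1) * (Nat.choose q (k - 2) : ℤ)) * e2

theorem stmt_3 (q t r : ℕ) (hr : 1 ≤ r) (ht : t = 2 * r) (hq : t + 1 ≤ q)
    (Δ : ℕ → ℤ)
    (hΔ : ∀ k, Δ k =
      (if k ≤ t then (Nat.choose (q + 1) (k - 1) * Nat.choose (q - 1) (t - k) : ℤ) else 0)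
      - (if 2 ≤ k then (Nat.choose q (k - 2) * Nat.choose q (t + 1 - k) : ℤ) else 0)) :
    (∀ k ∈ Finset.Icc 1 (r + 1), 0 < Δ k) ∧
    (∀ k ∈ Finset.Icc (r + 2) (t + 1), Δ k < 0) := by
  subst ht
  constructor
  · intro k hk
    simp only [Finset.mem_Icc] at hk
    rw [hΔ]
    rcases eq_or_lt_of_le hk.1 with h1 | h2
    · -- k = 1
      rw [← h1]
      have hle : 1 ≤ 2 * r := by omega
      have h2le : ¬ (2 ≤ 1) := by omega
      rw [if_pos hle, if_neg h2le]
      have hpos : 0 < Nat.choose (q - 1) (2 * r - 1) :=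
        Nat.choose_pos (by omega)
      have hpos2 : 0 < Nat.choose (q + 1) (1 - 1) := Nat.choose_pos (by omega)
      have : 0 < (Nat.choose (q + 1) (1 - 1) * Nat.choose (q - 1) (2 * r - 1) : ℤ) := by
        positivity
      linarith
    · -- 2 ≤ k ≤ r + 1
      have hk2 : 2 ≤ k := h2
      have hkt : k ≤ 2 * r := by omega
      rw [if_pos hkt, if_pos hk2]
      have key := key_id q r k hr hq hk2 hkt
      have hC : (0 : ℤ) < Nat.choose q (k - 2) := by
        exact_mod_cast Nat.choose_pos (show k - 2 ≤ q by omega)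
      have hD : (0 : ℤ) < Nat.choose q (2 * r + 1 - k) := by
        exact_mod_cast Nat.choose_pos (show 2 * r + 1 - k ≤ q by omega)
      have hn : (r : ℤ) ≤ ((2 * r + 1 - k : ℕ) : ℤ) := by exact_mod_cast (by omega : r ≤ 2 * r + 1 - k)
      have hm : ((k - 1 : ℕ) : ℤ) ≤ (r : ℤ) := by exact_mod_cast (by omega : k - 1 ≤ r)
      have hmpos : (0 : ℤ) < ((k - 1 : ℕ) : ℤ) := by exact_mod_cast (by omega : 0 < k - 1)
      have hqpos : (0 : ℤ) < (q : ℤ) := by exact_mod_cast (by omega : 0 < q)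
      have hrpos : (0 : ℤ) < (r : ℤ) := by exact_mod_cast hr
      have hbr : (0 : ℤ) < (q + 1) * ((2 * r + 1 - k : ℕ) : ℤ) - (q : ℤ) * ((k - 1 : ℕ) : ℤ) := by
        nlinarith
      have hRHS : (0 : ℤ) < (Nat.choose q (k - 2) : ℤ) * (Nat.choose q (2 * r + 1 - k) : ℤ)
          * ((q + 1) * ((2 * r + 1 - k : ℕ) : ℤ) - (q : ℤ) * ((k - 1 : ℕ) : ℤ)) := by
        positivity
      rw [← key] at hRHS
      rcases mul_pos_iff.mp hRHS with ⟨_, h⟩ | ⟨habs, _⟩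
      · exact h
      · nlinarith
  · intro k hk
    simp only [Finset.mem_Icc] at hk
    rw [hΔ]
    rcases eq_or_lt_of_le hk.2 with h1 | h2
    · -- k = t + 1
      rw [h1]
      have hle : ¬ (2 * r + 1 ≤ 2 * r) := by omega
      have h2le : 2 ≤ 2 * r + 1 := by omega
      rw [if_neg hle, if_pos h2le]
      have hpos : 0 < Nat.choose q (2 * r + 1 - 2) := Nat.choose_pos (by omega)
      have hpos2 : 0 < Nat.choose q (2 * r + 1 - (2 * r + 1)) := Nat.choose_pos (by omega)
      have : 0 < (Nat.choose q (2 * r + 1 - 2) * Nat.choose q (2 * r + 1 - (2 * r + 1)) : ℤ) := by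
        positivity
      linarith
    · -- r + 2 ≤ k ≤ t
      have hk2 : 2 ≤ k := by omega
      have hkt : k ≤ 2 * r := by omega
      rw [if_pos hkt, if_pos hk2]
      have key := key_id q r k hr hq hk2 hkt
      have hC : (0 : ℤ) < Nat.choose q (k - 2) := by
        exact_mod_cast Nat.choose_pos (show k - 2 ≤ q by omega)
      have hD : (0 : ℤ) < Nat.choose q (2 * r + 1 - k) := by
        exact_mod_cast Nat.choose_pos (show 2 * r + 1 - k ≤ q by omega)
      have hn : ((2 * r + 1 - k : ℕ) : ℤ) ≤ (r : ℤ) - 1 := by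
        have : (2 * r + 1 - k : ℕ) ≤ r - 1 := by omega
        have h' : ((2 * r + 1 - k : ℕ) : ℤ) ≤ ((r - 1 : ℕ) : ℤ) := by exact_mod_cast this
        have : ((r - 1 : ℕ) : ℤ) = (r : ℤ) - 1 := by
          have : (1 : ℕ) ≤ r := hr
          push_cast [Nat.cast_sub this]
          ring
        linarith
      have hm : (r : ℤ) + 1 ≤ ((k - 1 : ℕ) : ℤ) := by exact_mod_cast (by omega : r + 1 ≤ k - 1)
      have hqr : 2 * (r : ℤ) + 1 ≤ (q : ℤ) := by exact_mod_cast hq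
      have hmpos : (0 : ℤ) < ((k - 1 : ℕ) : ℤ) := by exact_mod_cast (by omega : 0 < k - 1)
      have hqpos : (0 : ℤ) < (q : ℤ) := by exact_mod_cast (by omega : 0 < q)
      have hrpos : (0 : ℤ) < (r : ℤ) := by exact_mod_cast hr
      have hbr : (q + 1) * ((2 * r + 1 - k : ℕ) : ℤ) - (q : ℤ) * ((k - 1 : ℕ) : ℤ) < 0 := by
        nlinarith
      have hRHS : (Nat.choose q (k - 2) : ℤ) * (Nat.choose q (2 * r + 1 - k) : ℤ)
          * ((q + 1) * ((2 * r + 1 - k : ℕ) : ℤ) - (q : ℤ) * ((k - 1 : ℕ) : ℤ)) < 0 := by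
        apply mul_neg_of_pos_of_neg (by positivity) hbr
      rw [← key] at hRHS
      rcases mul_neg_iff.mp hRHS with ⟨_, h⟩ | ⟨habs, _⟩
      · exact h
      · nlinarith
end

section
/- Let q and t = 2r be integers with q ≥ t+1 and r ≥ 1, and define Δ(k) = C(q+1, k-1)*C(q-1, t-k) - C(q, k-2)*C(q, t-k+1) for k in [1, t+1]. Then the weighted sum Σ_{k=1}^{t+1} (k-1) * Δ(k) is strictly negative. -/
/-! Writing `i = k - 1`, both halves of `Δ` become Vandermonde convolutions weighted by `i`.
Absorbing the weight through `i * C(a + 1, i) = (a + 1) * C(a, i - 1)` evaluates them to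
`(q + 1) C(2q - 1, t - 2)` and `q C(2q - 1, t - 2) + C(2q, t - 1)`, so by Pascal's rule the
weighted sum is `-C(2q - 1, t - 1) < 0`. -/

open Finset

namespace Nat

theorem sum_antidiagonal_fst_mul_choose_mul_choose (a b n : ℕ) :
    ∑ p ∈ antidiagonal (n + 1), p.1 * ((a + 1).choose p.1 * b.choose p.2) =
      (a + 1) * (a + b).choose n := by
  rw [Finset.Nat.sum_antidiagonal_succ, zero_mul, zero_add, add_choose_eq, mul_sum]
  refine sum_congr rfl fun p _ => ?_
  rw [← mul_assoc, mul_comm _ ((a + 1).choose _), ← add_one_mul_choose_eq]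
  ring

theorem sum_antidiagonal_fst_add_one_mul_choose_mul_choose (a b n : ℕ) :
    ∑ p ∈ antidiagonal (n + 1), (p.1 + 1) * ((a + 1).choose p.1 * b.choose p.2) =
      (a + 1) * (a + b).choose n + (a + 1 + b).choose (n + 1) := by
  rw [sum_congr rfl fun p _ => add_one_mul p.1 _, sum_add_distrib,
    sum_antidiagonal_fst_mul_choose_mul_choose, ← add_choose_eq]

end Nat

theorem Finset.sum_Icc_one_eq_sum_antidiagonal {M : Type*} [AddCommMonoid M] (n : ℕ)
    (f : ℕ → M) : ∑ k ∈ Icc 1 (n + 1), f k = ∑ p ∈ antidiagonal n, f (p.1 + 1) := by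
  rw [← Ico_add_one_right_eq_Icc, sum_Ico_eq_sum_range, Nat.add_sub_cancel,
    Nat.sum_antidiagonal_eq_sum_range_succ (fun i _ => f (i + 1))]
  simp only [add_comm]

theorem sum_Icc_sub_one_mul_ite_le (q n : ℕ) :
    ∑ k ∈ Icc 1 (n + 3), ((k : ℤ) - 1) *
        (if k ≤ n + 2 then ((q + 1).choose (k - 1) * (q - 1).choose (n + 2 - k) : ℤ) else 0) =
      ((q + 1) * (q + (q - 1)).choose n : ℕ) := by
  rw [sum_Icc_one_eq_sum_antidiagonal, Nat.sum_antidiagonal_succ', if_neg (by omega), mul_zero,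
    zero_add, ← Nat.sum_antidiagonal_fst_mul_choose_mul_choose, Nat.cast_sum]
  refine sum_congr rfl fun p hp => ?_
  rw [HasAntidiagonal.mem_antidiagonal] at hp
  dsimp only
  rw [if_pos (by omega), Nat.add_sub_cancel, show n + 2 - (p.1 + 1) = p.2 by omega]
  push_cast
  ring

theorem sum_Icc_sub_one_mul_ite_two_le (q n : ℕ) :
    ∑ k ∈ Icc 1 (n + 3), ((k : ℤ) - 1) *
        (if 2 ≤ k then ((q + 1).choose (k - 2) * (q + 1).choose (n + 3 - k) : ℤ) else 0) =
      ((q + 1) * (q + (q + 1)).choose n + (q + 1 + (q + 1)).choose (n + 1) : ℕ) := by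
  rw [sum_Icc_one_eq_sum_antidiagonal, Nat.sum_antidiagonal_succ, if_neg (by omega), mul_zero,
    zero_add, ← Nat.sum_antidiagonal_fst_add_one_mul_choose_mul_choose, Nat.cast_sum]
  refine sum_congr rfl fun p hp => ?_
  rw [HasAntidiagonal.mem_antidiagonal] at hp
  dsimp only
  rw [if_pos (by omega), show p.1 + 1 + 1 - 2 = p.1 by omega,
    show n + 3 - (p.1 + 1 + 1) = p.2 by omega]
  push_cast
  ring

theorem stmt_4 (q t r : ℕ) (hr : 1 ≤ r) (ht : t = 2 * r) (hq : t + 1 ≤ q)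
    (Δ : ℕ → ℤ)
    (hΔ : ∀ k, Δ k =
      (if k ≤ t then (Nat.choose (q + 1) (k - 1) * Nat.choose (q - 1) (t - k) : ℤ) else 0)
      - (if 2 ≤ k then (Nat.choose q (k - 2) * Nat.choose q (t + 1 - k) : ℤ) else 0)) :
    ∑ k ∈ Finset.Icc 1 (t + 1), ((k : ℤ) - 1) * Δ k < 0 := by
  obtain ⟨n, rfl⟩ : ∃ n, t = n + 2 := ⟨t - 2, by omega⟩
  obtain ⟨p, rfl⟩ : ∃ p, q = p + 1 := ⟨q - 1, by omega⟩
  simp only [hΔ, mul_sub, sum_sub_distrib]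
  rw [sum_Icc_sub_one_mul_ite_le, sum_Icc_sub_one_mul_ite_two_le]
  have pascal : (p + 1 + (p + 1)).choose (n + 1) =
      (2 * p + 1).choose n + (2 * p + 1).choose (n + 1) := by
    rw [← Nat.choose_succ_succ']
    ring_nf
  have pos : 0 < (2 * p + 1).choose (n + 1) := Nat.choose_pos (by omega)
  rw [pascal, Nat.add_sub_cancel, show p + 1 + p = 2 * p + 1 by ring,
    show p + (p + 1) = 2 * p + 1 by ring]
  push_cast
  linarith
end

section
/- Let q and t = 2r be integers with q ≥ t+1 and r ≥ 1. Define Δ(k) = C(q+1, k-1)*C(q-1, t-k) - C(q, k-2)*C(q, t-k+1) for k in [1, t+1], and define the weight vector α(k) = min(k-1, t+1-k) for k in [1, t+1] (i.e., α = (0, 1, ..., r-1, r, r-1, ..., 1, 0)). Then Σ_{k=1}^{t+1} α(k) * Δ(k) is strictly positive. -/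
/-!
By Pascal's rule, `Δ k = F k - F (k - 1)` for `2 ≤ k ≤ t`, where
`F k = C(q, k-1) C(q-1, t-k)`. The tent-shaped weight `α` is a sum of indicators of the nested
intervals `(j, t + 1 - j]`, `1 ≤ j ≤ r`, so the weighted sum telescopes to
`∑ j, (F (t + 1 - j) - F j)`. Each term is positive because `C(q-1, a) / C(q, a) = (q - a) / q`
decreases in `a`.
-/

open Finset

theorem Finset.sum_Ioc_sub_pred {M : Type*} [AddCommGroup M] (f : ℕ → M) {a b : ℕ} (hab : a ≤ b) :
    ∑ k ∈ Ioc a b, (f k - f (k - 1)) = f b - f a := by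
  rw [← Ico_add_one_add_one_eq_Ioc, ← sum_Ico_add' (fun k => f k - f (k - 1))]
  simpa only [Nat.add_sub_cancel] using sum_Ico_sub f hab

theorem Nat.choose_succ_mul_choose_lt {n a b : ℕ} (hba : b < a) (han : a ≤ n) :
    (n + 1).choose b * n.choose a < (n + 1).choose a * n.choose b := by
  have hpos : 0 < (n + 1).choose b * (n + 1).choose a :=
    Nat.mul_pos (Nat.choose_pos (by omega)) (Nat.choose_pos (by omega))
  refine Nat.lt_of_mul_lt_mul_right (a := n + 1) ?_
  calc (n + 1).choose b * n.choose a * (n + 1)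
      = (n + 1).choose b * (n + 1).choose a * (n + 1 - a) := by
        rw [mul_assoc, Nat.choose_mul_succ_eq, mul_assoc]
    _ < (n + 1).choose b * (n + 1).choose a * (n + 1 - b) :=
        Nat.mul_lt_mul_of_pos_left (by omega) hpos
    _ = (n + 1).choose a * n.choose b * (n + 1) := by
        rw [mul_comm ((n + 1).choose b), mul_assoc, mul_assoc, Nat.choose_mul_succ_eq]

theorem Nat.choose_mul_choose_sub_pascal {n t k : ℕ} (hk2 : 2 ≤ k) (hkt : k ≤ t) :
    ((n + 2).choose (k - 1) * n.choose (t - k) : ℤ)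
        - (n + 1).choose (k - 2) * (n + 1).choose (t + 1 - k)
      = (n + 1).choose (k - 1) * n.choose (t - k)
        - (n + 1).choose (k - 2) * n.choose (t - (k - 1)) := by
  obtain ⟨j, rfl⟩ : ∃ j, k = j + 2 := ⟨k - 2, by omega⟩
  obtain ⟨m, hm⟩ : ∃ m, t - (j + 2) = m := ⟨_, rfl⟩
  rw [show j + 2 - 1 = j + 1 by omega, show j + 2 - 2 = j by omega,
    show t + 1 - (j + 2) = m + 1 by omega, show t - (j + 1) = m + 1 by omega, hm,
    Nat.choose_succ_succ (n + 1) j, Nat.choose_succ_succ n m]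
  push_cast
  ring

theorem sum_min_smul_eq_sum_sum_Ioc {M : Type*} [AddCommMonoid M] (r : ℕ) (f : ℕ → M) :
    ∑ k ∈ Icc 1 (2 * r + 1), min (k - 1) (2 * r + 1 - k) • f k
      = ∑ j ∈ Icc 1 r, ∑ k ∈ Ioc j (2 * r + 1 - j), f k := by
  rw [sum_comm' (t' := Icc 1 (2 * r + 1))
    (s' := fun k => (Icc 1 r).filter (fun j => k ∈ Ioc j (2 * r + 1 - j)))]
  · refine sum_congr rfl fun k hk => ?_
    rw [sum_const]
    have hlayers : (Icc 1 r).filter (fun j => k ∈ Ioc j (2 * r + 1 - j))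
        = Icc 1 (min (k - 1) (2 * r + 1 - k)) := by
      ext j
      simp only [mem_filter, mem_Icc, mem_Ioc] at hk ⊢
      omega
    rw [hlayers, Nat.card_Icc, Nat.add_sub_cancel]
  · intro j k
    simp only [mem_filter, mem_Icc, mem_Ioc]
    omega

theorem stmt_5 (q t r : ℕ) (hr : 1 ≤ r) (ht : t = 2 * r) (hq : t + 1 ≤ q)
    (Δ : ℕ → ℤ)
    (hΔ : ∀ k, Δ k =
      (if k ≤ t then (Nat.choose (q + 1) (k - 1) * Nat.choose (q - 1) (t - k) : ℤ) else 0)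
      - (if 2 ≤ k then (Nat.choose q (k - 2) * Nat.choose q (t + 1 - k) : ℤ) else 0))
    (α : ℕ → ℕ) (hα : ∀ k, α k = min (k - 1) (t + 1 - k)) :
    0 < ∑ k ∈ Finset.Icc 1 (t + 1), (α k : ℤ) * Δ k := by
  subst ht
  obtain ⟨n, rfl⟩ : ∃ n, q = n + 1 := ⟨q - 1, by omega⟩
  set F : ℕ → ℤ := fun k => (n + 1).choose (k - 1) * n.choose (2 * r - k)
  have hΔF : ∀ j ∈ Icc 1 r, ∀ k ∈ Ioc j (2 * r + 1 - j), Δ k = F k - F (k - 1) := by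
    intro j hj k hk
    simp only [mem_Icc, mem_Ioc] at hj hk
    rw [hΔ, if_pos (by omega), if_pos (by omega), Nat.add_sub_cancel]
    exact Nat.choose_mul_choose_sub_pascal (by omega) (by omega)
  simp_rw [hα, ← nsmul_eq_mul]
  rw [sum_min_smul_eq_sum_sum_Ioc r Δ]
  refine sum_pos (fun j hj => ?_) ⟨1, by simp [hr]⟩
  have hjr : 1 ≤ j ∧ j ≤ r := mem_Icc.mp hj
  rw [sum_congr rfl (hΔF j hj), sum_Ioc_sub_pred F (by omega), sub_pos]
  simp only [F, show 2 * r + 1 - j - 1 = 2 * r - j by omega,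
    show 2 * r - (2 * r + 1 - j) = j - 1 by omega]
  exact_mod_cast Nat.choose_succ_mul_choose_lt (n := n) (by omega : j - 1 < 2 * r - j) (by omega)
end

section
/- Let q ≥ t be positive integers with t = 2r, r ≥ 1. Define Δ(k) = C(q+1, k-1)*C(q-1, t-k) - C(q, k-2)*C(q, t-k+1). Then δ(1) := Δ(1) + Δ(t+1) = C(q-1, t-1) - C(q, t-1) = -C(q-1, t-2) < 0, and δ(r+1) := Δ(r+1) = (1/q) * C(q, r-1) * C(q, r) > 0. -/
theorem stmt_6 (q t r : ℕ) (hr : 1 ≤ r) (ht : t = 2 * r) (hq : t ≤ q)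
    (Δ : ℕ → ℤ)
    (hΔ : ∀ k, Δ k =
      (if k ≤ t then (Nat.choose (q + 1) (k - 1) * Nat.choose (q - 1) (t - k) : ℤ) else 0)
      - (if 2 ≤ k then (Nat.choose q (k - 2) * Nat.choose q (t + 1 - k) : ℤ) else 0)) :
    Δ 1 + Δ (t + 1) = (Nat.choose (q - 1) (t - 1) : ℤ) - Nat.choose q (t - 1) ∧
    Δ 1 + Δ (t + 1) = -(Nat.choose (q - 1) (t - 2) : ℤ) ∧
    Δ 1 + Δ (t + 1) < 0 ∧
    ((Δ (r + 1) : ℚ) = (1 / (q : ℚ)) * Nat.choose q (r - 1) * Nat.choose q r) ∧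
    0 < Δ (r + 1) := by
  have ht2 : 2 ≤ t := by omega
  have h1 : Δ 1 = (Nat.choose (q - 1) (t - 1) : ℤ) := by
    rw [hΔ 1]
    simp [show 1 ≤ t by omega]
  have h2 : Δ (t + 1) = -(Nat.choose q (t - 1) : ℤ) := by
    rw [hΔ (t + 1)]
    simp [show ¬ (t + 1 ≤ t) by omega, show t + 1 - 2 = t - 1 by omega]
    intro h; exact absurd h (by omega)
  have hsum : Δ 1 + Δ (t + 1) = (Nat.choose (q - 1) (t - 1) : ℤ) - Nat.choose q (t - 1) := by
    rw [h1, h2]; ring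
  -- Pascal
  obtain ⟨a, ha⟩ : ∃ a, q = a + 1 := ⟨q - 1, by omega⟩
  obtain ⟨b, hb⟩ : ∃ b, t = b + 2 := ⟨t - 2, by omega⟩
  have hpascal : Nat.choose q (t - 1) = Nat.choose (q - 1) (t - 2) + Nat.choose (q - 1) (t - 1) := by
    subst ha hb
    simp [Nat.choose_succ_succ]
  have hsum2 : Δ 1 + Δ (t + 1) = -(Nat.choose (q - 1) (t - 2) : ℤ) := by
    rw [hsum, hpascal]; push_cast; ring
  have hposb : 0 < Nat.choose (q - 1) (t - 2) := Nat.choose_pos (by omega)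
  -- key identity for Δ(r+1)
  have hk1 : q * Nat.choose (q - 1) (r - 1) = Nat.choose q r * r := by
    have h := Nat.add_one_mul_choose_eq (q - 1) (r - 1)
    simp only [Nat.succ_eq_add_one, show q - 1 + 1 = q by omega,
      show r - 1 + 1 = r by omega] at h
    exact h
  have hk2 : (q + 1) * Nat.choose q (r - 1) = Nat.choose (q + 1) r * r := by
    have h := Nat.add_one_mul_choose_eq q (r - 1)
    simp only [Nat.succ_eq_add_one, show r - 1 + 1 = r by omega] at h
    exact h
  have key : q * (Nat.choose (q + 1) r * Nat.choose (q - 1) (r - 1))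
      = (q + 1) * (Nat.choose q (r - 1) * Nat.choose q r) := by
    calc q * (Nat.choose (q + 1) r * Nat.choose (q - 1) (r - 1))
        = Nat.choose (q + 1) r * (q * Nat.choose (q - 1) (r - 1)) := by ring
      _ = Nat.choose (q + 1) r * (Nat.choose q r * r) := by rw [hk1]
      _ = (Nat.choose (q + 1) r * r) * Nat.choose q r := by ring
      _ = ((q + 1) * Nat.choose q (r - 1)) * Nat.choose q r := by rw [hk2]
      _ = (q + 1) * (Nat.choose q (r - 1) * Nat.choose q r) := by ring
  have hval : Δ (r + 1) = (Nat.choose (q + 1) r * Nat.choose (q - 1) (r - 1) : ℤ)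
      - Nat.choose q (r - 1) * Nat.choose q r := by
    rw [hΔ (r + 1)]
    simp [show r + 1 ≤ t by omega, show 2 ≤ r + 1 by omega, show t - (r + 1) = r - 1 by omega,
      show r + 1 - 2 = r - 1 by omega, show t + 1 - (r + 1) = r by omega]
  have keyZ : (q : ℤ) * (Nat.choose (q + 1) r * Nat.choose (q - 1) (r - 1))
      = (q + 1) * (Nat.choose q (r - 1) * Nat.choose q r) := by exact_mod_cast key
  have hz : (q : ℤ) * Δ (r + 1) = (Nat.choose q (r - 1) : ℤ) * Nat.choose q r := by
    rw [hval]; linear_combination keyZ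
  have hq0 : (0 : ℤ) < q := by exact_mod_cast (by omega : 0 < q)
  have hpos : (0 : ℤ) < (Nat.choose q (r - 1) : ℤ) * Nat.choose q r := by
    have h1 := Nat.choose_pos (show r - 1 ≤ q by omega)
    have h2 := Nat.choose_pos (show r ≤ q by omega)
    positivity
  refine ⟨hsum, hsum2, by rw [hsum2]; simpa using hposb, ?_, ?_⟩
  · have hqQ : (q : ℚ) ≠ 0 := by exact_mod_cast (by omega : q ≠ 0)
    field_simp
    have : ((q : ℤ) * Δ (r + 1) : ℚ) = ((Nat.choose q (r - 1) : ℤ) * Nat.choose q r : ℚ) := by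
      exact_mod_cast congrArg (fun x : ℤ => (x : ℚ)) hz
    push_cast at this ⊢
    linarith [this]
  · nlinarith [hz, hpos, hq0]
end

section
/- Let t = 2r with r ≥ 1 be fixed, and for q ≥ t+1 define f_k(q) = C(q+1, k-1)*C(q, t-k+1) for k in [1, t+1], α_k = 2(k-1) for k in [1, r] and α_k = t for k in [r+1, t+1]. Then the limit as q → ∞ of (Σ_{k=1}^{t+1} α_k f_k(q)) / (t * Σ_{k=1}^{t+1} f_k(q)) equals 1 - (1/2) * C(t, r) / 2^t. -/
/-!
Each term `C(q+1, j) C(q, t-j)` is asymptotic to `C(t, j) q^t / t!`, so the ratio tends to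
`(∑ⱼ min(2j, t) C(t, j)) / (t 2^t)`. The defect `∑_{j<r} (t - 2j) C(t, j)` from `t 2^t` telescopes,
because `(t - 2j) C(t, j) = (j + 1) C(t, j + 1) - j C(t, j)`, to `r C(t, r)`.
-/
open Filter Finset Asymptotics Topology

lemma isEquivalent_natCast_add_one :
    (fun n : ℕ => ((n + 1 : ℕ) : ℝ)) ~[atTop] fun n => (n : ℝ) := by
  push_cast
  refine IsEquivalent.refl.add_const_of_norm_tendsto_atTop ?_
  simpa [Function.comp_def] using tendsto_natCast_atTop_atTop

lemma isEquivalent_add_one_choose (m : ℕ) :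
    (fun n : ℕ => ((n + 1).choose m : ℝ)) ~[atTop] fun n => (n : ℝ) ^ m / m.factorial :=
  ((isEquivalent_choose m).comp_tendsto (tendsto_add_atTop_nat 1)).trans
    ((isEquivalent_natCast_add_one.pow m).div IsEquivalent.refl)

lemma isEquivalent_add_one_choose_mul_choose {t j : ℕ} (hj : j ≤ t) :
    (fun q : ℕ => ((q + 1).choose j : ℝ) * q.choose (t - j)) ~[atTop]
      fun q => t.choose j * ((q : ℝ) ^ t / t.factorial) := by
  refine ((isEquivalent_add_one_choose j).mul (isEquivalent_choose (t - j))).congr_right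
    (Eventually.of_forall fun q => ?_)
  simp only [Pi.mul_apply]
  have hpow : (q : ℝ) ^ t = q ^ j * q ^ (t - j) := by rw [← pow_add, Nat.add_sub_cancel' hj]
  rw [Nat.cast_choose ℝ hj, hpow]
  field_simp

lemma tendsto_sum_mul_div_sum_of_isEquivalent {α ι : Type*} {l : Filter α} (s : Finset ι)
    (a c : ι → ℝ) {f : ι → α → ℝ} {g : α → ℝ} (hf : ∀ i ∈ s, f i ~[l] fun x => c i * g x)
    (hg : ∀ᶠ x in l, g x ≠ 0) (hc : ∑ i ∈ s, c i ≠ 0) :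
    Tendsto (fun x => (∑ i ∈ s, a i * f i x) / ∑ i ∈ s, f i x) l
      (𝓝 ((∑ i ∈ s, a i * c i) / ∑ i ∈ s, c i)) := by
  have hlim : ∀ i ∈ s, Tendsto (fun x => f i x / g x) l (𝓝 (c i)) := fun i hi =>
    ((hf i hi).div IsEquivalent.refl).tendsto_nhds_iff.mpr <| tendsto_const_nhds.congr' <| by
      filter_upwards [hg] with x hx
      simp [hx]
  have hnum := tendsto_finsetSum s fun i hi => (hlim i hi).const_mul (a i)
  have hden := tendsto_finsetSum s hlim
  refine (hnum.div hden hc).congr' ?_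
  filter_upwards [hg] with x hx
  show (∑ i ∈ s, a i * (f i x / g x)) / ∑ i ∈ s, f i x / g x = _
  simp only [mul_div_assoc', ← sum_div, div_div_div_cancel_right₀ hx]

lemma sum_range_sub_two_mul_mul_choose (n m : ℕ) :
    ∑ j ∈ range m, ((n : ℝ) - 2 * j) * n.choose j = m * n.choose m := by
  induction m with
  | zero => simp
  | succ m ih =>
    rw [sum_range_succ, ih]
    rcases le_or_gt m n with hmn | hmn
    · have h : (n.choose (m + 1) : ℝ) * (m + 1) = n.choose m * (n - m) := by
        rw [← Nat.cast_sub hmn]; exact_mod_cast Nat.choose_succ_right_eq n m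
      push_cast
      linear_combination -h
    · simp [Nat.choose_eq_zero_of_lt hmn, Nat.choose_eq_zero_of_lt (hmn.trans (Nat.lt_succ_self m))]

lemma sum_range_min_mul_choose (r : ℕ) :
    ∑ j ∈ range (2 * r + 1), min (2 * (j : ℝ)) (2 * r) * (2 * r).choose j
      = 2 * r * 2 ^ (2 * r) - r * (2 * r).choose r := by
  let w : ℕ → ℝ := fun j => (2 * r - min (2 * (j : ℝ)) (2 * r)) * (2 * r).choose j
  have hlow : ∑ j ∈ range r, w j = ∑ j ∈ range r, (((2 * r : ℕ) : ℝ) - 2 * j) * (2 * r).choose j :=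
    sum_congr rfl fun j hj => by
      have : (j : ℝ) < r := by exact_mod_cast mem_range.mp hj
      simp only [w, min_eq_left (by linarith : 2 * (j : ℝ) ≤ 2 * r), Nat.cast_mul, Nat.cast_ofNat]
  have hhigh : ∑ j ∈ Ico r (2 * r + 1), w j = 0 := sum_eq_zero fun j hj => by
    have : (r : ℝ) ≤ j := by exact_mod_cast (mem_Ico.mp hj).1
    simp only [w, min_eq_right (by linarith : 2 * (r : ℝ) ≤ 2 * j), sub_self, zero_mul]
  have hdefect : ∑ j ∈ range (2 * r + 1), w j = r * (2 * r).choose r := by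
    rw [← sum_range_add_sum_Ico _ (by omega : r ≤ 2 * r + 1), hhigh, hlow, add_zero,
      sum_range_sub_two_mul_mul_choose]
  have htotal : ∑ j ∈ range (2 * r + 1), (2 * r : ℝ) * (2 * r).choose j = 2 * r * 2 ^ (2 * r) := by
    rw [← mul_sum]; exact_mod_cast congrArg (2 * r * ·) (Nat.sum_range_choose (2 * r))
  simp only [w, sub_mul, sum_sub_distrib, htotal] at hdefect
  linarith

theorem stmt_11 (t r : ℕ) (hr : 1 ≤ r) (ht : t = 2 * r)
    (α : ℕ → ℕ) (hα : ∀ k, α k = if k ≤ r then 2 * (k - 1) else t) :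
    Filter.Tendsto
      (fun q : ℕ =>
        (∑ k ∈ Finset.Icc 1 (t + 1),
            (α k : ℝ) * ((Nat.choose (q + 1) (k - 1) * Nat.choose q (t + 1 - k) : ℕ) : ℝ)) /
          ((t : ℝ) * ∑ k ∈ Finset.Icc 1 (t + 1),
            ((Nat.choose (q + 1) (k - 1) * Nat.choose q (t + 1 - k) : ℕ) : ℝ)))
      Filter.atTop
      (nhds (1 - (1 / 2) * (Nat.choose t r : ℝ) / 2 ^ t)) := by
  subst ht
  have hweight : ∀ j, (α (j + 1) : ℝ) = min (2 * (j : ℝ)) (2 * r) := fun j => by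
    rw [hα]
    split_ifs with hj
    · rw [min_eq_left (by exact_mod_cast (by omega : 2 * j ≤ 2 * r))]
      simp
    · rw [min_eq_right (by exact_mod_cast (by omega : 2 * r ≤ 2 * j))]
      simp
  have hpow : ∀ᶠ q : ℕ in atTop, (q : ℝ) ^ (2 * r) / (2 * r).factorial ≠ 0 :=
    (eventually_ne_atTop 0).mono fun q hq => by positivity
  have hmass : ∑ j ∈ range (2 * r + 1), ((2 * r).choose j : ℝ) = 2 ^ (2 * r) := by
    exact_mod_cast Nat.sum_range_choose (2 * r)
  have hlim := (tendsto_sum_mul_div_sum_of_isEquivalent (range (2 * r + 1))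
    (fun j => (α (j + 1) : ℝ)) (fun j => ((2 * r).choose j : ℝ))
    (fun j hj => isEquivalent_add_one_choose_mul_choose (Nat.lt_succ_iff.mp (mem_range.mp hj)))
    hpow (by rw [hmass]; positivity)).div_const (2 * r : ℝ)
  have hreindex : ∀ F : ℕ → ℝ, ∑ k ∈ Icc 1 (2 * r + 1), F k = ∑ j ∈ range (2 * r + 1), F (j + 1) :=
    fun F => by rw [range_eq_Ico, sum_Ico_add' F 0 (2 * r + 1) 1]; rfl
  convert hlim using 2 with q
  · simp only [hreindex, Nat.add_sub_add_right]
    push_cast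
    ring
  · simp only [hweight, sum_range_min_mul_choose, hmass]
    have : (r : ℝ) ≠ 0 := Nat.cast_ne_zero.mpr (by omega)
    field_simp
end

section
/- Let t = 2r ≥ 2 be fixed. For q ≥ t+1 define ρ(q) = F_PT(q) / F_JCM(q), where F_PT(q) = Σ_{k=1}^{t+1} α_k * C(q+1, k-1)*C(q, t-k+1) with α_k = 2(k-1) for k ≤ r and α_k = t otherwise, and F_JCM(q) = t * C(2q+1, t). Then ρ(q) is strictly decreasing in q, i.e., ρ(q+1) < ρ(q) for all q ≥ t+1. -/
/-!
With the hypergeometric weights `b n j = C(n+1, j) * C(n, t-j)` one has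
`ρ(q) = (2/t) * E[min(J_q, r)]`, and the decrease holds for `E[c(J_n)]` with any nondecreasing
concave `c` such that `c 0 < c 1`.

Consecutive weights are related by `(n+2)(n+1) b n j = b (n+1) j * w j` with
`w j = (n+2-j)(n+1-t+j)`, and `w i - w j = (i-j)(t+1-i-j)`. The symmetrisation behind
Chebyshev's sum inequality turns the cross difference of the two means into the double sum of
`(c i - c j)(i-j)(t+1-i-j) b (n+1) i * b (n+1) j`. Its terms with `i + j ≤ t + 1` are nonnegative
because `c` is monotone. A term with `i + j > t + 1` is compensated by the term at the reflected
pair `(t+1-j, t+1-i)`: by `j * b (n+1) j = (t+1-j) * b (n+1) (t+1-j)` the two compare through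
`i * j ≥ (t+1-i)(t+1-j)` and, by concavity, `c i - c j ≤ c (t+1-j) - c (t+1-i)`. The term at
`(0, 1)` is strictly positive.
-/

open Finset

def hyperWeight (n t j : ℕ) : ℕ := (n + 1).choose j * n.choose (t - j)

theorem sum_range_hyperWeight (n t : ℕ) :
    ∑ j ∈ range (t + 1), hyperWeight n t j = (2 * n + 1).choose t := by
  rw [show 2 * n + 1 = (n + 1) + n by ring, Nat.add_choose_eq,
    Nat.sum_antidiagonal_eq_sum_range_succ_mk]
  rfl

theorem hyperWeight_pos {n t j : ℕ} (hj : j ≤ t) (ht : t ≤ n) : 0 < hyperWeight n t j :=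
  Nat.mul_pos (Nat.choose_pos (by omega)) (Nat.choose_pos (by omega))

theorem hyperWeight_mul (n t j : ℕ) :
    hyperWeight n t j * ((n + 2) * (n + 1)) =
      hyperWeight (n + 1) t j * ((n + 2 - j) * (n + 1 - (t - j))) := by
  have h₁ := Nat.choose_mul_succ_eq (n + 1) j
  have h₂ := Nat.choose_mul_succ_eq n (t - j)
  unfold hyperWeight
  calc (n + 1).choose j * n.choose (t - j) * ((n + 2) * (n + 1))
      = ((n + 1).choose j * (n + 1 + 1)) * (n.choose (t - j) * (n + 1)) := by ring
    _ = _ := by rw [h₁, h₂]; ring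

theorem hyperWeight_mul_rat {n t j : ℕ} (hj : j ≤ t) (htn : t ≤ n + 1) :
    ((n : ℚ) + 2) * (n + 1) * hyperWeight n t j =
      hyperWeight (n + 1) t j * (((n : ℚ) + 2 - j) * ((n : ℚ) + 1 - t + j)) := by
  have h := congrArg (Nat.cast : ℕ → ℚ) (hyperWeight_mul n t j)
  push_cast [Nat.cast_sub (by omega : j ≤ n + 2), Nat.cast_sub hj,
    Nat.cast_sub (by omega : t - j ≤ n + 1)] at h
  linear_combination h

theorem mul_hyperWeight_reflect {n t j : ℕ} (h₁ : 1 ≤ j) (h₂ : j ≤ t) :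
    j * hyperWeight n t j = (t + 1 - j) * hyperWeight n t (t + 1 - j) := by
  obtain ⟨k, rfl⟩ : ∃ k, j = k + 1 := ⟨j - 1, by omega⟩
  obtain ⟨m, hm⟩ : ∃ m, t + 1 - (k + 1) = m + 1 := ⟨t - k - 1, by omega⟩
  have hk : t - (k + 1) = m := by omega
  have hm' : t - (m + 1) = k := by omega
  unfold hyperWeight
  rw [hm, hk, hm']
  calc (k + 1) * ((n + 1).choose (k + 1) * n.choose m)
      = ((n + 1) * n.choose k) * n.choose m := by rw [Nat.add_one_mul_choose_eq n k]; ring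
    _ = ((n + 1) * n.choose m) * n.choose k := by ring
    _ = (m + 1) * ((n + 1).choose (m + 1) * n.choose k) := by
      rw [Nat.add_one_mul_choose_eq n m]; ring

theorem two_mul_sum_mul_sum_sub_sum_mul_sum {ι R : Type*} [CommRing R] (s : Finset ι)
    (c a w : ι → R) :
    2 * ((∑ i ∈ s, c i * (a i * w i)) * ∑ i ∈ s, a i -
        (∑ i ∈ s, c i * a i) * ∑ i ∈ s, a i * w i) =
      ∑ i ∈ s, ∑ j ∈ s, (c i - c j) * (w i - w j) * (a i * a j) := by
  have hcross : (∑ i ∈ s, c i * (a i * w i)) * ∑ i ∈ s, a i -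
      (∑ i ∈ s, c i * a i) * ∑ i ∈ s, a i * w i =
        ∑ i ∈ s, ∑ j ∈ s, c i * a i * a j * (w i - w j) := by
    simp only [sum_mul_sum, ← sum_sub_distrib]
    exact sum_congr rfl fun i _ => sum_congr rfl fun j _ => by ring
  have hswap : ∑ i ∈ s, ∑ j ∈ s, c i * a i * a j * (w i - w j) =
      ∑ i ∈ s, ∑ j ∈ s, c j * a j * a i * (w j - w i) := sum_comm
  rw [hcross, two_mul]
  nth_rewrite 2 [hswap]
  simp only [← sum_add_distrib]
  exact sum_congr rfl fun i _ => sum_congr rfl fun j _ => by ring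

theorem sum_nonneg_of_pairing {ι M : Type*} [DecidableEq ι] [AddCommMonoid M] [PartialOrder M]
    [IsOrderedAddMonoid M] {s B : Finset ι} {f : ι → M} {φ : ι → ι} (hB : B ⊆ s)
    (hφ : ∀ p ∈ B, φ p ∈ s \ B) (hφinj : Set.InjOn φ B) (hf : ∀ p ∈ s \ B, 0 ≤ f p)
    (hpair : ∀ p ∈ B, 0 ≤ f p + f (φ p)) : 0 ≤ ∑ p ∈ s, f p := by
  have himage : ∑ p ∈ B, f (φ p) ≤ ∑ p ∈ s \ B, f p := by
    rw [← sum_image hφinj]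
    refine sum_le_sum_of_subset_of_nonneg ?_ fun p hp _ => hf p hp
    simpa only [image_subset_iff] using hφ
  calc (0 : M) ≤ ∑ p ∈ B, (f p + f (φ p)) := sum_nonneg hpair
    _ = ∑ p ∈ B, f p + ∑ p ∈ B, f (φ p) := sum_add_distrib
    _ ≤ ∑ p ∈ B, f p + ∑ p ∈ s \ B, f p := add_le_add_right himage _
    _ = ∑ p ∈ s, f p := by rw [add_comm, sum_sdiff hB]

section CrossTerm

variable (c : ℕ → ℕ) (a : ℕ → ℚ) (t : ℕ)

def crossTerm (i j : ℕ) : ℚ :=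
  ((c i : ℚ) - c j) * ((i : ℚ) - j) * ((t : ℚ) + 1 - i - j) * (a i * a j)

variable {c a t}

theorem crossTerm_comm (i j : ℕ) : crossTerm c a t i j = crossTerm c a t j i := by
  unfold crossTerm; ring

theorem crossTerm_nonneg (hc : Monotone c) {i j : ℕ} (hai : 0 ≤ a i) (haj : 0 ≤ a j)
    (hij : i + j ≤ t + 1) : 0 ≤ crossTerm c a t i j := by
  have hmono : 0 ≤ ((c i : ℚ) - c j) * ((i : ℚ) - j) := by
    rcases le_total i j with h | h
    · exact mul_nonneg_of_nonpos_of_nonpos (sub_nonpos.2 (by exact_mod_cast hc h))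
        (sub_nonpos.2 (by exact_mod_cast h))
    · exact mul_nonneg (sub_nonneg.2 (by exact_mod_cast hc h)) (sub_nonneg.2 (by exact_mod_cast h))
  have hw : 0 ≤ (t : ℚ) + 1 - i - j := by
    have : (i : ℚ) + j ≤ t + 1 := by exact_mod_cast hij
    linarith
  unfold crossTerm
  positivity

theorem crossTerm_zero_one_pos (ht : 1 ≤ t) (hc : c 0 < c 1) (ha₀ : 0 < a 0) (ha₁ : 0 < a 1) :
    0 < crossTerm c a t 0 1 := by
  have hc' : (c 0 : ℚ) < c 1 := by exact_mod_cast hc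
  have ht' : (0 : ℚ) < t := by exact_mod_cast ht
  have : crossTerm c a t 0 1 = ((c 1 : ℚ) - c 0) * t * (a 0 * a 1) := by
    unfold crossTerm; push_cast; ring
  rw [this]
  exact mul_pos (mul_pos (sub_pos.2 hc') ht') (mul_pos ha₀ ha₁)

theorem mul_crossTerm_add_crossTerm_eq {i j i' j' : ℕ} (hi' : (i' : ℚ) + j = t + 1)
    (hj' : (j' : ℚ) + i = t + 1) (hai' : (i' : ℚ) * a i' = j * a j)
    (haj' : (j' : ℚ) * a j' = i * a i) :
    (i' : ℚ) * j' * (crossTerm c a t i j + crossTerm c a t i' j') =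
      ((i : ℚ) - j) * (i + j - t - 1) * (a i * a j) *
        (((c i' : ℚ) - c j') * (i * j) - ((c i : ℚ) - c j) * (i' * j')) := by
  have e₁ : (i' : ℚ) = t + 1 - j := by linarith
  have e₂ : (j' : ℚ) = t + 1 - i := by linarith
  unfold crossTerm
  rw [e₁] at hai'; rw [e₂] at haj'; rw [e₁, e₂]
  linear_combination ((c i' : ℚ) - c j') * (i - j) * (i + j - t - 1) *
    ((t + 1 - i) * a j' * hai' + j * a j * haj')

theorem crossTerm_add_crossTerm_reflect_nonneg (hc : Monotone c)
    (hconc : ∀ x y d, x ≤ y → c (y + d) + c x ≤ c (x + d) + c y) (ha : ∀ x ≤ t, 0 ≤ a x)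
    (hrefl : ∀ x, 1 ≤ x → x ≤ t → (x : ℚ) * a x = (t + 1 - x : ℕ) * a (t + 1 - x))
    {i j : ℕ} (hi : i ≤ t) (hj : j ≤ t) (hij : t + 1 < i + j) :
    0 ≤ crossTerm c a t i j + crossTerm c a t (t + 1 - j) (t + 1 - i) := by
  wlog hji : j ≤ i generalizing i j
  · rw [crossTerm_comm, crossTerm_comm (t + 1 - j)]
    exact this hj hi (by omega) (by omega)
  set i' := t + 1 - j with hi'
  set j' := t + 1 - i with hj'
  have hconc' : (c i : ℚ) - c j ≤ c i' - c j' := by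
    have h := hconc j' j (i - j) (by omega)
    rw [show j + (i - j) = i by omega, show j' + (i - j) = i' by omega] at h
    have h' : (c i : ℚ) + c j' ≤ c i' + c j := by exact_mod_cast h
    linarith
  have hbracket : ((c i : ℚ) - c j) * (i' * j') ≤ ((c i' : ℚ) - c j') * (i * j) :=
    calc ((c i : ℚ) - c j) * (i' * j') ≤ ((c i : ℚ) - c j) * (i * j) := by
          refine mul_le_mul_of_nonneg_left ?_ (sub_nonneg.2 (by exact_mod_cast hc hji))
          exact_mod_cast Nat.mul_le_mul (by omega : i' ≤ i) (by omega : j' ≤ j)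
      _ ≤ ((c i' : ℚ) - c j') * (i * j) := mul_le_mul_of_nonneg_right hconc' (by positivity)
  have hsum := mul_crossTerm_add_crossTerm_eq (c := c) (i' := i') (j' := j')
    (by rw [hi']; push_cast [Nat.cast_sub (by omega : j ≤ t + 1)]; ring)
    (by rw [hj']; push_cast [Nat.cast_sub (by omega : i ≤ t + 1)]; ring)
    (hrefl j (by omega) hj).symm (hrefl i (by omega) hi).symm
  have hpos : (0 : ℚ) < i' * j' := by exact_mod_cast Nat.mul_pos (by omega) (by omega)
  have hji_q : (j : ℚ) ≤ i := by exact_mod_cast hji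
  have hijq : (t : ℚ) + 1 < i + j := by exact_mod_cast hij
  refine nonneg_of_mul_nonneg_right ?_ hpos
  rw [hsum]
  exact mul_nonneg (mul_nonneg (mul_nonneg (by linarith) (by linarith))
    (mul_nonneg (ha i hi) (ha j hj))) (sub_nonneg.2 hbracket)

theorem sum_sum_crossTerm_pos (ht : 1 ≤ t) (hc : Monotone c)
    (hconc : ∀ x y d, x ≤ y → c (y + d) + c x ≤ c (x + d) + c y) (hc₀₁ : c 0 < c 1)
    (ha : ∀ x ≤ t, 0 < a x)
    (hrefl : ∀ x, 1 ≤ x → x ≤ t → (x : ℚ) * a x = (t + 1 - x : ℕ) * a (t + 1 - x)) :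
    0 < ∑ i ∈ range (t + 1), ∑ j ∈ range (t + 1), crossTerm c a t i j := by
  set S := range (t + 1) ×ˢ range (t + 1)
  have h₀₁ : ((0 : ℕ), (1 : ℕ)) ∈ S := by simp only [S, mem_product, mem_range]; omega
  rw [← sum_product' (f := crossTerm c a t), ← add_sum_erase S _ h₀₁]
  refine add_pos_of_pos_of_nonneg (crossTerm_zero_one_pos ht hc₀₁ (ha 0 (by omega)) (ha 1 ht)) ?_
  refine sum_nonneg_of_pairing (B := (S.erase (0, 1)).filter fun p => t + 1 < p.1 + p.2)
    (φ := fun p => (t + 1 - p.2, t + 1 - p.1)) (filter_subset _ _) ?_ ?_ ?_ ?_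
  · intro p hp
    simp only [S, mem_sdiff, mem_filter, mem_erase, mem_product, mem_range, ne_eq,
      Prod.ext_iff] at hp ⊢
    omega
  · intro p hp p' hp' h
    simp only [S, coe_filter, mem_erase, mem_product, mem_range, Set.mem_ofPred_eq,
      Prod.ext_iff] at hp hp' h ⊢
    omega
  · intro p hp
    simp only [S, mem_sdiff, mem_filter, mem_erase, mem_product, mem_range, ne_eq,
      Prod.ext_iff] at hp
    exact crossTerm_nonneg hc (ha _ (by omega)).le (ha _ (by omega)).le (by omega)
  · intro p hp
    simp only [S, mem_filter, mem_erase, mem_product, mem_range] at hp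
    exact crossTerm_add_crossTerm_reflect_nonneg hc hconc (fun x hx => (ha x hx).le) hrefl
      (by omega) (by omega) hp.2

end CrossTerm

def hypergeomMean (c : ℕ → ℕ) (n t : ℕ) : ℚ :=
  (∑ j ∈ range (t + 1), (c j : ℚ) * hyperWeight n t j) /
    ∑ j ∈ range (t + 1), (hyperWeight n t j : ℚ)

theorem hypergeomMean_succ_lt {c : ℕ → ℕ} (hc : Monotone c)
    (hconc : ∀ x y d, x ≤ y → c (y + d) + c x ≤ c (x + d) + c y) (hc₀₁ : c 0 < c 1)
    {n t : ℕ} (ht : 1 ≤ t) (htn : t ≤ n + 1) :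
    hypergeomMean c (n + 1) t < hypergeomMean c n t := by
  set s := range (t + 1)
  set a : ℕ → ℚ := fun j => hyperWeight (n + 1) t j
  set b : ℕ → ℚ := fun j => hyperWeight n t j
  set w : ℕ → ℚ := fun j => ((n : ℚ) + 2 - j) * ((n : ℚ) + 1 - t + j)
  set K : ℚ := ((n : ℚ) + 2) * (n + 1)
  have hb : ∀ j ∈ s, K * b j = a j * w j := fun j hj =>
    hyperWeight_mul_rat (mem_range_succ_iff.1 hj) htn
  have hcb : K * ∑ j ∈ s, (c j : ℚ) * b j = ∑ j ∈ s, (c j : ℚ) * (a j * w j) := by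
    rw [mul_sum]; exact sum_congr rfl fun j hj => by rw [← hb j hj]; ring
  have hsb : K * ∑ j ∈ s, b j = ∑ j ∈ s, a j * w j := by
    rw [mul_sum]; exact sum_congr rfl hb
  have ha : ∀ j ≤ t, 0 < a j := fun j hj => by
    simp only [a]; exact_mod_cast hyperWeight_pos hj htn
  have hsa : 0 < ∑ j ∈ s, a j := sum_pos (fun j hj => ha j (mem_range_succ_iff.1 hj))
    nonempty_range_add_one
  have hsb_pos : 0 < ∑ j ∈ s, b j := by
    simp only [b, s]; exact_mod_cast (sum_range_hyperWeight n t).symm ▸ Nat.choose_pos (by omega)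
  have hrefl : ∀ j, 1 ≤ j → j ≤ t → (j : ℚ) * a j = (t + 1 - j : ℕ) * a (t + 1 - j) :=
    fun j hj₁ hj₂ => by simp only [a]; exact_mod_cast mul_hyperWeight_reflect hj₁ hj₂
  have hcross : 0 < 2 * K * ((∑ j ∈ s, (c j : ℚ) * b j) * ∑ j ∈ s, a j -
      (∑ j ∈ s, (c j : ℚ) * a j) * ∑ j ∈ s, b j) := by
    calc (0 : ℚ) < ∑ i ∈ s, ∑ j ∈ s, crossTerm c a t i j :=
          sum_sum_crossTerm_pos ht hc hconc hc₀₁ ha hrefl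
      _ = ∑ i ∈ s, ∑ j ∈ s, ((c i : ℚ) - c j) * (w i - w j) * (a i * a j) :=
          sum_congr rfl fun i _ => sum_congr rfl fun j _ => by simp only [crossTerm, w]; ring
      _ = _ := by rw [← two_mul_sum_mul_sum_sub_sum_mul_sum, ← hcb, ← hsb]; ring
  unfold hypergeomMean
  rw [div_lt_div_iff₀ hsa hsb_pos, ← sub_pos]
  exact pos_of_mul_pos_right hcross (by positivity)

theorem stmt_13 (t r : ℕ) (hr : 1 ≤ r) (ht : t = 2 * r)
    (α : ℕ → ℕ) (hα : ∀ k, α k = if k ≤ r then 2 * (k - 1) else t)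
    (FPT FJCM : ℕ → ℕ)
    (hFPT : ∀ q, FPT q = ∑ k ∈ Finset.Icc 1 (t + 1),
        α k * (Nat.choose (q + 1) (k - 1) * Nat.choose q (t + 1 - k)))
    (hFJCM : ∀ q, FJCM q = t * Nat.choose (2 * q + 1) t) :
    ∀ q, t + 1 ≤ q →
      (FPT (q + 1) : ℚ) / (FJCM (q + 1) : ℚ) < (FPT q : ℚ) / (FJCM q : ℚ) := by
  intro q hq
  have hFPT' : ∀ n, FPT n = 2 * ∑ j ∈ range (t + 1), min j r * hyperWeight n t j := by
    intro n
    have hshift : ∀ f : ℕ → ℕ, ∑ k ∈ Icc 1 (t + 1), f k = ∑ j ∈ range (t + 1), f (j + 1) :=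
      fun f => by rw [range_eq_Ico, sum_Ico_add', zero_add, ← Ico_succ_right_eq_Icc]; rfl
    rw [hFPT, hshift, mul_sum]
    refine sum_congr rfl fun j _ => ?_
    rw [hα, hyperWeight, show t + 1 - (j + 1) = t - j by omega, Nat.add_sub_cancel]
    split_ifs with hjr
    · rw [min_eq_left (by omega)]; ring
    · rw [min_eq_right (by omega), ht]; ring
  have hρ : ∀ n, t ≤ 2 * n + 1 →
      (FPT n : ℚ) / FJCM n = 2 / t * hypergeomMean (fun j => min j r) n t := by
    intro n hn
    have hB : (0 : ℚ) < (2 * n + 1).choose t := by exact_mod_cast Nat.choose_pos hn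
    rw [hFPT', hFJCM, ← sum_range_hyperWeight, hypergeomMean]
    push_cast
    field_simp
  have ht₀ : (0 : ℚ) < t := by exact_mod_cast (by omega : 0 < t)
  rw [hρ _ (by omega), hρ _ (by omega)]
  refine mul_lt_mul_of_pos_left (hypergeomMean_succ_lt ?_ ?_ ?_ (by omega) (by omega))
    (by positivity)
  · exact fun x y hxy => by omega
  · intro x y d _; omega
  · omega
end

section
/- Let K = 2q+1 and t = 2r with q, r positive integers, q ≥ t+1. For q1 in [q+1, K-t-1] and k in [1, r], define F_{q1}(k) = C(q1, k-1) * C(K - q1, t-k+1). Then F_{q1}(k) > F_{q1+1}(k) for all k in [1, r] and all q1 in [q+1, K-t-2]; i.e., F_{q1}(k) is strictly decreasing in q1 on this range. -/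
lemma stmt_16_aux (n a m b : ℕ) (ha : a ≤ n) (hb : b ≤ m + 1)
    (h : a * (m + 1) < (n + 1) * b) :
    Nat.choose (n + 1) a * Nat.choose m b <
      Nat.choose n a * Nat.choose (m + 1) b := by
  have h1 := Nat.choose_mul_succ_eq n a
  have h2 := Nat.choose_mul_succ_eq m b
  have hc1 : 0 < Nat.choose n a := Nat.choose_pos ha
  have hc2 : 0 < Nat.choose (m + 1) b := Nat.choose_pos hb
  have ha' : a ≤ n + 1 := le_trans ha (by omega)
  have key : (n + 1) * (m + 1 - b) < (n + 1 - a) * (m + 1) := by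
    zify [hb, ha']
    nlinarith
  have main : (Nat.choose (n + 1) a * Nat.choose m b) * ((n + 1 - a) * (m + 1)) <
      (Nat.choose n a * Nat.choose (m + 1) b) * ((n + 1 - a) * (m + 1)) := by
    calc (Nat.choose (n + 1) a * Nat.choose m b) * ((n + 1 - a) * (m + 1))
        = (Nat.choose (n + 1) a * (n + 1 - a)) * (Nat.choose m b * (m + 1)) := by ring
      _ = (Nat.choose n a * (n + 1)) * (Nat.choose (m + 1) b * (m + 1 - b)) := by
            rw [← h1, h2]
      _ = (Nat.choose n a * Nat.choose (m + 1) b) * ((n + 1) * (m + 1 - b)) := by ring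
      _ < (Nat.choose n a * Nat.choose (m + 1) b) * ((n + 1 - a) * (m + 1)) := by
            exact mul_lt_mul_of_pos_left key (Nat.mul_pos hc1 hc2)
  exact Nat.lt_of_mul_lt_mul_right main

theorem stmt_16 (q r t K : ℕ) (hr : 1 ≤ r) (ht : t = 2 * r) (hK : K = 2 * q + 1)
    (hq : t + 1 ≤ q) :
    ∀ q1, q + 1 ≤ q1 → q1 ≤ K - t - 2 →
      ∀ k, 1 ≤ k → k ≤ r →
        Nat.choose (q1 + 1) (k - 1) * Nat.choose (K - (q1 + 1)) (t + 1 - k) <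
          Nat.choose q1 (k - 1) * Nat.choose (K - q1) (t + 1 - k) := by
  subst ht hK
  intro q1 hq1 hq1' k hk hkr
  have hm1 : 2 * q + 1 - (q1 + 1) = (2 * q + 1 - q1 - 1) := by omega
  have hm2 : 2 * q + 1 - q1 = (2 * q + 1 - q1 - 1) + 1 := by omega
  rw [hm1, hm2]
  apply stmt_16_aux
  · omega
  · omega
  · -- (k-1) * (2*q+1-q1) < (q1+1) * (2*r+1-k)
    have h1 : (k - 1) * ((2 * q + 1 - q1 - 1) + 1) ≤ (r - 1) * q :=
      Nat.mul_le_mul (by omega) (by omega)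
    have h2 : (r - 1) * q ≤ r * q := Nat.mul_le_mul_right _ (by omega)
    have h3 : r * q < (r + 1) * (q + 2) := by nlinarith
    have h4 : (r + 1) * (q + 2) ≤ (2 * r + 1 - k) * (q1 + 1) :=
      Nat.mul_le_mul (by omega) (by omega)
    calc (k - 1) * ((2 * q + 1 - q1 - 1) + 1) ≤ r * q := le_trans h1 h2
      _ < (r + 1) * (q + 2) := h3
      _ ≤ (2 * r + 1 - k) * (q1 + 1) := h4
      _ = (q1 + 1) * (2 * r + 1 - k) := Nat.mul_comm _ _
end

section
/- Let K = 2q+1, t = 2r with q ≥ t+1, r ≥ 1. Define α_k = 2(k-1) for k in [1, r] and α_k = t for k in [r+1, t+1], and for q1 in [q+1, K-t-1], define F(q1) = Σ_{k=1}^{t+1} α_k * C(q1, k-1) * C(K-q1, t-k+1). Then F(q1) < F(q1+1) for all q1 in [q+1, K-t-2]; in particular q1 = q+1 minimizes F(q1) over [q+1, K-t-1]. -/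
/-!
Pascal's rule, applied once in each block, gives the summation by parts
`W(n+1, m) - W(n, m+1) = ∑ⱼ (w (j+1) - w j) C(n, j) C(m, t-1-j)` for the weighted count
`W(n, m) = ∑ⱼ w j C(n, j) C(m, t-j)`. The weights `w j = α (j+1)` are nondecreasing and jump
from `0` to `2` at `j = 0`, so the difference is at least `2 C(m, t-1) > 0`.
-/

open Finset

/-- Weighted count of the `t`-subsets of a set split into blocks of sizes `n` and `m`, a subset
meeting the first block in `j` points having weight `w j`; `F q₁` is the case `n = q₁`,
`m = K - q₁`, `w j = α (j + 1)`. -/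
def weightedVandermonde (w : ℕ → ℕ) (t n m : ℕ) : ℕ :=
  ∑ j ∈ range (t + 1), w j * (n.choose j * m.choose (t - j))

theorem weightedVandermonde_succ_left (w : ℕ → ℕ) (s n m : ℕ) :
    weightedVandermonde w (s + 1) (n + 1) m =
      ∑ j ∈ range (s + 1), w (j + 1) * (n.choose j * m.choose (s - j)) +
        weightedVandermonde w (s + 1) n m := by
  unfold weightedVandermonde
  rw [sum_range_succ', sum_range_succ' _ (s + 1)]
  simp only [Nat.choose_succ_succ', Nat.add_sub_add_right, Nat.choose_zero_right, add_mul,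
    mul_add, sum_add_distrib]
  ring

theorem weightedVandermonde_succ_right (w : ℕ → ℕ) (s n m : ℕ) :
    weightedVandermonde w (s + 1) n (m + 1) =
      ∑ j ∈ range (s + 1), w j * (n.choose j * m.choose (s - j)) +
        weightedVandermonde w (s + 1) n m := by
  unfold weightedVandermonde
  have hpascal : ∀ j ∈ range (s + 1), w j * (n.choose j * (m + 1).choose (s + 1 - j)) =
      w j * (n.choose j * m.choose (s - j)) + w j * (n.choose j * m.choose (s + 1 - j)) := by
    intro j hj
    rw [Nat.sub_add_comm (Nat.lt_succ_iff.mp (mem_range.mp hj)), Nat.choose_succ_succ']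
    ring
  rw [sum_range_succ, sum_range_succ _ (s + 1), sum_congr rfl hpascal, sum_add_distrib]
  simp only [Nat.sub_self, Nat.choose_zero_right]
  ring

theorem weightedVandermonde_lt_succ_left {w : ℕ → ℕ} (hw : Monotone w) (hw01 : w 0 < w 1)
    {s m : ℕ} (n : ℕ) (hsm : s ≤ m) :
    weightedVandermonde w (s + 1) n (m + 1) < weightedVandermonde w (s + 1) (n + 1) m := by
  rw [weightedVandermonde_succ_left, weightedVandermonde_succ_right]
  refine Nat.add_lt_add_right (sum_lt_sum (fun j _ => Nat.mul_le_mul_right _ (hw j.le_succ))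
    ⟨0, by simp, ?_⟩) _
  simpa using Nat.mul_lt_mul_of_pos_right hw01 (Nat.choose_pos hsm)

theorem sum_Icc_one_eq_sum_range {M : Type*} [AddCommMonoid M] (f : ℕ → M) (t : ℕ) :
    ∑ k ∈ Icc 1 (t + 1), f k = ∑ j ∈ range (t + 1), f (j + 1) := by
  rw [range_eq_Ico, sum_Ico_add']
  rfl

theorem stmt_17_general (q r t K : ℕ) (hr : 1 ≤ r) (ht : t = 2 * r)
    (α : ℕ → ℕ) (hα : ∀ k, α k = if k ≤ r then 2 * (k - 1) else t)
    (F : ℕ → ℕ)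
    (hF : ∀ q1, F q1 = ∑ k ∈ Finset.Icc 1 (t + 1),
        α k * (Nat.choose q1 (k - 1) * Nat.choose (K - q1) (t + 1 - k))) :
    ∀ q1, q + 1 ≤ q1 → q1 ≤ K - t - 2 → F q1 < F (q1 + 1) := by
  intro q1 h1 h2
  obtain ⟨s, rfl⟩ : ∃ s, t = s + 1 := ⟨2 * r - 1, by omega⟩
  have hF' : ∀ n, F n = weightedVandermonde (fun j => α (j + 1)) (s + 1) n (K - n) := by
    intro n
    rw [hF, sum_Icc_one_eq_sum_range]
    simp only [Nat.add_sub_cancel, Nat.add_sub_add_right]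
    rfl
  have hw : Monotone fun j => α (j + 1) := by
    refine monotone_nat_of_le_succ fun j => ?_
    simp only [hα]
    split_ifs <;> omega
  have hw01 : α 1 < α 2 := by
    simp only [hα]
    split_ifs <;> omega
  rw [hF', hF', show K - q1 = K - (q1 + 1) + 1 by omega]
  exact weightedVandermonde_lt_succ_left hw hw01 q1 (by omega)

theorem stmt_17 (q r t K : ℕ) (hr : 1 ≤ r) (ht : t = 2 * r) (hK : K = 2 * q + 1)
    (hq : t + 1 ≤ q)
    (α : ℕ → ℕ) (hα : ∀ k, α k = if k ≤ r then 2 * (k - 1) else t)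
    (F : ℕ → ℕ)
    (hF : ∀ q1, F q1 = ∑ k ∈ Finset.Icc 1 (t + 1),
        α k * (Nat.choose q1 (k - 1) * Nat.choose (K - q1) (t + 1 - k))) :
    ∀ q1, q + 1 ≤ q1 → q1 ≤ K - t - 2 → F q1 < F (q1 + 1) :=
  stmt_17_general q r t K hr ht α hα F hF
end

section
/- For the case t = 2 and K = 2q+1 with q ≥ 3: F_PT = 2*q*(q+1) + 2*C(q+1, 2) = 3(K^2 - 1)/4, F_JCM = 2*C(K, 2) = K(K-1), and hence F_PT / F_JCM = (3/4)(1 + 1/K), which is at most 6/7 for all K ≥ 7 and converges to 3/4 as K → ∞. -/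
lemma choose2 (n : ℕ) : 2 * Nat.choose (n + 1) 2 = (n + 1) * n := by
  rw [Nat.choose_two_right]
  have h : 2 ∣ (n + 1) * ((n + 1) - 1) := by
    simpa [Nat.mul_comm] using (Nat.even_mul_succ_self n).two_dvd
  simpa using Nat.mul_div_cancel' h

theorem stmt_18 :
    (∀ q : ℕ, 3 ≤ q →
      ((2 * q * (q + 1) + 2 * Nat.choose (q + 1) 2 : ℕ) : ℚ) =
          3 * (((2 * q + 1 : ℕ) : ℚ) ^ 2 - 1) / 4 ∧
      ((2 * Nat.choose (2 * q + 1) 2 : ℕ) : ℚ) =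
          ((2 * q + 1 : ℕ) : ℚ) * (((2 * q + 1 : ℕ) : ℚ) - 1) ∧
      ((2 * q * (q + 1) + 2 * Nat.choose (q + 1) 2 : ℕ) : ℚ) /
          ((2 * Nat.choose (2 * q + 1) 2 : ℕ) : ℚ) =
        3 / 4 * (1 + 1 / ((2 * q + 1 : ℕ) : ℚ)) ∧
      ((2 * q * (q + 1) + 2 * Nat.choose (q + 1) 2 : ℕ) : ℚ) /
          ((2 * Nat.choose (2 * q + 1) 2 : ℕ) : ℚ) ≤ 6 / 7) ∧
    Filter.Tendsto
      (fun q : ℕ =>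
        ((2 * q * (q + 1) + 2 * Nat.choose (q + 1) 2 : ℕ) : ℝ) /
          ((2 * Nat.choose (2 * q + 1) 2 : ℕ) : ℝ))
      Filter.atTop (nhds (3 / 4)) := by
  have h1 : ∀ q : ℕ, 2 * Nat.choose (q + 1) 2 = (q + 1) * q := choose2
  have h2 : ∀ q : ℕ, 2 * Nat.choose (2 * q + 1) 2 = (2 * q + 1) * (2 * q) := fun q =>
    choose2 (2 * q)
  constructor
  · intro q hq
    have hq' : (0 : ℚ) < (q : ℚ) := by exact_mod_cast Nat.lt_of_lt_of_le (by norm_num) hq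
    have hd : ((2 * q + 1 : ℕ) : ℚ) ≠ 0 := by positivity
    have key : ((2 * q * (q + 1) + 2 * Nat.choose (q + 1) 2 : ℕ) : ℚ) /
          ((2 * Nat.choose (2 * q + 1) 2 : ℕ) : ℚ) =
        3 / 4 * (1 + 1 / ((2 * q + 1 : ℕ) : ℚ)) := by
      rw [h1, h2]
      push_cast
      have hq0 : (q : ℚ) ≠ 0 := ne_of_gt hq'
      field_simp
      ring
    refine ⟨by rw [h1]; push_cast; ring, by rw [h2]; push_cast; ring, key, ?_⟩
    rw [key]
    have h7 : (7 : ℚ) ≤ ((2 * q + 1 : ℕ) : ℚ) := by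
      have : 7 ≤ 2 * q + 1 := by omega
      exact_mod_cast this
    have : 1 / ((2 * q + 1 : ℕ) : ℚ) ≤ 1 / 7 :=
      one_div_le_one_div_of_le (by norm_num) h7
    nlinarith
  · have hev : ∀ᶠ q : ℕ in Filter.atTop,
        ((2 * q * (q + 1) + 2 * Nat.choose (q + 1) 2 : ℕ) : ℝ) /
            ((2 * Nat.choose (2 * q + 1) 2 : ℕ) : ℝ) =
          3 / 4 * (1 + 1 / ((2 * q + 1 : ℕ) : ℝ)) := by
      filter_upwards [Filter.eventually_ge_atTop 1] with q hq
      have hq0 : (q : ℝ) ≠ 0 := by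
        exact_mod_cast Nat.one_le_iff_ne_zero.mp hq
      rw [h1, h2]
      push_cast
      have hd : (2 * (q : ℝ) + 1) ≠ 0 := by positivity
      field_simp
      ring
    rw [Filter.tendsto_congr' hev]
    have h0 : Filter.Tendsto (fun q : ℕ => 1 / ((2 * q + 1 : ℕ) : ℝ))
        Filter.atTop (nhds 0) := by
      apply Filter.Tendsto.div_atTop tendsto_const_nhds
      exact tendsto_natCast_atTop_atTop.comp (Filter.tendsto_atTop_mono
        (fun q => by simp only [id]; omega) Filter.tendsto_id)
    have := (h0.const_add 1).const_mul (3 / 4 : ℝ)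
    simpa using this
end
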